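/- arXiv:2412.07206 — 5 statements merged into one kernel-verified Lean document; each statement's English description precedes it below -/
import Mathlib

section
/- There exists a constant C > 0 such that for all complex numbers u and v, Re(conj(u) * (R*(u+v) - (1+i*μ)*|u+v|^2*(u+v))) ≤ C*(1 + |u|^2 + |v|^4), where R > 0 and μ ∈ ℝ are fixed parameters. -/
open Complex

/-- The Ginzburg-Landau nonlinearity `Ψ₀(z) = R z - (1+iμ)|z|² z`. -/
noncomputable def Psi0 (R μ : ℝ) (z : ℂ) : ℂ :=
  R * z - (1 + μ * Complex.I) * (‖z‖ : ℂ) ^ 2 * z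

/-!
Write `w = u + v`, so that `conj u = conj w - conj v`. The first part gives
`Re (conj w Ψ₀(w)) = R|w|² - |w|⁴`, which carries the dissipative term `-|w|⁴`; the second is
bounded by `|v| |Ψ₀(w)| ≤ |v| (|R| |w| + |1+iμ| |w|³)`. Young's inequality lets `-|w|⁴` absorb
every power of `|w|`, leaving a bound by a multiple of `1 + |v|⁴`.
-/

lemma quartic_absorb (A B K : ℝ) {b c : ℝ} (hb : 0 ≤ b) (hc : 0 ≤ c) :
    A * c ^ 2 + B * b * c + K * b * c ^ 3 - c ^ 4 ≤
      (A ^ 2 + B ^ 4 + 2 * K ^ 4 + 1) * (1 + b ^ 4) := by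
  have hA : A * c ^ 2 ≤ A ^ 2 + c ^ 4 / 4 := by nlinarith [sq_nonneg (c ^ 2 / 2 - A)]
  have hB : B * b * c ≤ (B ^ 4 + b ^ 4) / 4 + (c ^ 4 + 1) / 4 := by
    nlinarith [sq_nonneg (B * b - c), sq_nonneg (B ^ 2 - b ^ 2), sq_nonneg (c ^ 2 - 1)]
  have hK : K * b * c ^ 3 ≤ 3 * c ^ 4 / 8 + 2 * K ^ 4 * b ^ 4 := by
    nlinarith [sq_nonneg (K * b * c - c ^ 2 / 2), sq_nonneg (c ^ 2 / 4 - K ^ 2 * b ^ 2)]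
  nlinarith [pow_nonneg hb 4, pow_nonneg hc 4, sq_nonneg A, pow_nonneg (sq_nonneg B) 2,
    pow_nonneg (sq_nonneg K) 2, mul_nonneg (sq_nonneg A) (pow_nonneg hb 4),
    mul_nonneg (pow_nonneg (sq_nonneg B) 2) (pow_nonneg hb 4)]

section Psi0

variable (R μ : ℝ)

lemma Psi0_eq_mul (z : ℂ) : Psi0 R μ z = (R - (1 + μ * I) * (‖z‖ : ℂ) ^ 2) * z := by
  unfold Psi0; ring

lemma re_conj_mul_Psi0_self (z : ℂ) :
    ((starRingEnd ℂ) z * Psi0 R μ z).re = R * ‖z‖ ^ 2 - ‖z‖ ^ 4 := by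
  rw [Psi0_eq_mul, mul_left_comm, conj_mul']
  simp only [← ofReal_pow, mul_re, sub_re, sub_im, ofReal_re, ofReal_im, add_re, add_im,
    one_re, one_im, I_re, I_im]
  ring

lemma norm_Psi0_le (z : ℂ) : ‖Psi0 R μ z‖ ≤ |R| * ‖z‖ + ‖1 + μ * I‖ * ‖z‖ ^ 3 := by
  calc ‖Psi0 R μ z‖ ≤ ‖(R : ℂ) * z‖ + ‖(1 + μ * I) * (‖z‖ : ℂ) ^ 2 * z‖ := norm_sub_le _ _
    _ = |R| * ‖z‖ + ‖1 + μ * I‖ * ‖z‖ ^ 3 := by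
      simp only [norm_mul, norm_pow, norm_real, Real.norm_eq_abs, abs_norm]; ring

lemma re_conj_mul_Psi0_add_le (u v : ℂ) :
    ((starRingEnd ℂ) u * Psi0 R μ (u + v)).re ≤
      (R ^ 2 + |R| ^ 4 + 2 * ‖1 + μ * I‖ ^ 4 + 1) * (1 + ‖v‖ ^ 4) := by
  set w := u + v
  have hsplit : (starRingEnd ℂ) u * Psi0 R μ w =
      (starRingEnd ℂ) w * Psi0 R μ w - (starRingEnd ℂ) v * Psi0 R μ w := by
    simp only [w, map_add]; ring
  have hcross : -((starRingEnd ℂ) v * Psi0 R μ w).re ≤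
      ‖v‖ * (|R| * ‖w‖ + ‖1 + μ * I‖ * ‖w‖ ^ 3) := by
    calc -((starRingEnd ℂ) v * Psi0 R μ w).re ≤ ‖(starRingEnd ℂ) v * Psi0 R μ w‖ := by
          simpa using re_le_norm (-((starRingEnd ℂ) v * Psi0 R μ w))
      _ = ‖v‖ * ‖Psi0 R μ w‖ := by rw [norm_mul, RCLike.norm_conj]
      _ ≤ _ := mul_le_mul_of_nonneg_left (norm_Psi0_le R μ w) (norm_nonneg v)
  calc ((starRingEnd ℂ) u * Psi0 R μ w).re
      ≤ R * ‖w‖ ^ 2 + |R| * ‖v‖ * ‖w‖ + ‖1 + μ * I‖ * ‖v‖ * ‖w‖ ^ 3 - ‖w‖ ^ 4 := by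
        rw [hsplit, sub_re, re_conj_mul_Psi0_self]; linarith
    _ ≤ _ := quartic_absorb _ _ _ (norm_nonneg v) (norm_nonneg w)

end Psi0

theorem stmt0_general (R μ : ℝ) :
    ∃ C : ℝ, 0 < C ∧ ∀ u v : ℂ,
      ((starRingEnd ℂ) u * Psi0 R μ (u + v)).re ≤ C * (1 + ‖u‖ ^ 2 + ‖v‖ ^ 4) := by
  refine ⟨R ^ 2 + |R| ^ 4 + 2 * ‖1 + μ * I‖ ^ 4 + 1, by positivity, fun u v => ?_⟩
  calc ((starRingEnd ℂ) u * Psi0 R μ (u + v)).re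
      ≤ (R ^ 2 + |R| ^ 4 + 2 * ‖1 + μ * I‖ ^ 4 + 1) * (1 + ‖v‖ ^ 4) :=
        re_conj_mul_Psi0_add_le R μ u v
    _ ≤ _ := by gcongr; nlinarith [sq_nonneg ‖u‖]

theorem stmt0 (R μ : ℝ) (hR : 0 < R) :
    ∃ C : ℝ, 0 < C ∧ ∀ u v : ℂ,
      ((starRingEnd ℂ) u * Psi0 R μ (u + v)).re ≤ C * (1 + ‖u‖ ^ 2 + ‖v‖ ^ 4) :=
  stmt0_general R μ
end

section
/- If |v| ≤ |u|/(1 + |μ|), then Re(conj(u) * (1+i*μ)*|u+v|^2*(u+v)) ≥ 0 for all complex u, v and real μ. -/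
open Complex

theorem stmt3 (μ : ℝ) (u v : ℂ) (h : ‖v‖ ≤ ‖u‖ / (1 + |μ|)) :
    0 ≤ ((starRingEnd ℂ) u * ((1 + μ * Complex.I) * (‖u + v‖ : ℂ) ^ 2 * (u + v))).re := by
  have hpos : (0:ℝ) < 1 + |μ| := by positivity
  have h1 : (1 + |μ|) * ‖v‖ ≤ ‖u‖ := by
    rw [le_div_iff₀ hpos] at h; linarith [h]
  set z : ℂ := (u + v) * (starRingEnd ℂ) u with hz
  have hzsplit : z = u * (starRingEnd ℂ) u + v * (starRingEnd ℂ) u := by rw [hz]; ring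
  have habs : ‖v * (starRingEnd ℂ) u‖ = ‖v‖ * ‖u‖ := by
    rw [norm_mul, Complex.norm_conj]
  have hzre : ‖u‖ ^ 2 - ‖u‖ * ‖v‖ ≤ z.re := by
    rw [hzsplit, Complex.add_re, Complex.mul_conj', ← Complex.ofReal_pow,
      Complex.ofReal_re]
    have h2 : -(‖v‖ * ‖u‖) ≤ (v * (starRingEnd ℂ) u).re := by
      have h3 := Complex.abs_re_le_norm (v * (starRingEnd ℂ) u)
      rw [habs] at h3
      linarith [(abs_le.mp h3).1]
    nlinarith [h2]
  have hzim : |z.im| ≤ ‖v‖ * ‖u‖ := by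
    have him : z.im = (v * (starRingEnd ℂ) u).im := by
      rw [hzsplit, Complex.add_im, Complex.mul_conj', ← Complex.ofReal_pow,
        Complex.ofReal_im, zero_add]
    rw [him]
    have h3 := Complex.abs_im_le_norm (v * (starRingEnd ℂ) u)
    rw [habs] at h3; exact h3
  have hkey : 0 ≤ ((1 + μ * Complex.I) * z).re := by
    have : ((1 + μ * Complex.I) * z).re = z.re - μ * z.im := by
      simp only [Complex.mul_re, Complex.add_re, Complex.add_im, Complex.one_re,
        Complex.one_im, Complex.mul_im, Complex.I_re, Complex.I_im, Complex.ofReal_re,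
        Complex.ofReal_im]
      ring
    rw [this]
    have hμ : μ * z.im ≤ |μ| * (‖v‖ * ‖u‖) := by
      calc μ * z.im ≤ |μ * z.im| := le_abs_self _
        _ = |μ| * |z.im| := abs_mul _ _
        _ ≤ |μ| * (‖v‖ * ‖u‖) := by
            exact mul_le_mul_of_nonneg_left hzim (abs_nonneg μ)
    nlinarith [norm_nonneg u, norm_nonneg v, mul_le_mul_of_nonneg_left h1 (norm_nonneg u)]
  have heq : ((starRingEnd ℂ) u * ((1 + μ * Complex.I) * (‖u + v‖ : ℂ) ^ 2 * (u + v))).re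
      = ‖u + v‖ ^ 2 * ((1 + μ * Complex.I) * z).re := by
    have : (starRingEnd ℂ) u * ((1 + μ * Complex.I) * (‖u + v‖ : ℂ) ^ 2 * (u + v))
        = ((‖u + v‖ : ℂ) ^ 2) * ((1 + μ * Complex.I) * z) := by rw [hz]; ring
    rw [this, ← Complex.ofReal_pow, Complex.re_ofReal_mul]
  rw [heq]
  positivity
end

section
/- There exists C > 0 (depending only on R and μ) such that for all Δt ∈ (0,1) and all z₁, z₂ ∈ ℂ, |Ψ_Δt(z₁) - Ψ_Δt(z₂)| ≤ C*(1 + |z₁|^2 + |z₂|^2)*|z₁ - z₂|, where Ψ_Δt(z) = (Φ_Δt(z) - z)/Δt and Φ_Δt is the Ginzburg-Landau flow map. -/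
open Complex

/-- `α(Δt) = (e^{2RΔt} - 1)/R`. -/
noncomputable def alphaGL (R Δt : ℝ) : ℝ := (Real.exp (2 * R * Δt) - 1) / R

/-- The flow map `Φ_Δt` of the ODE `z' = Rz - (1+iμ)|z|²z`. -/
noncomputable def PhiFlow (R μ Δt : ℝ) (z : ℂ) : ℂ :=
  ((Real.exp (R * Δt) / Real.sqrt (alphaGL R Δt * ‖z‖ ^ 2 + 1)) : ℂ) *
    Complex.exp (-Complex.I * (μ / 2) * (Real.log (alphaGL R Δt * ‖z‖ ^ 2 + 1) : ℂ)) * z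

/-- The time-discrete nonlinearity `Ψ_Δt(z) = (Φ_Δt(z) - z)/Δt`. -/
noncomputable def PsiFlow (R μ Δt : ℝ) (z : ℂ) : ℂ := (PhiFlow R μ Δt z - z) / Δt

private lemma exp_sub_one_le' (x : ℝ) : Real.exp x - 1 ≤ x * Real.exp x := by
  have h1 := Real.add_one_le_exp (-x)
  have h2 : Real.exp (-x) * Real.exp x = 1 := by
    rw [← Real.exp_add]; simp
  nlinarith [Real.exp_pos x]

private lemma H_lip (c : ℂ) (hc : c.re ≤ 0) {u v : ℝ} (hu : 1 ≤ u) (hv : 1 ≤ v) :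
    ‖Complex.exp (c * (Real.log u : ℂ)) - Complex.exp (c * (Real.log v : ℂ))‖ ≤ ‖c‖ * |u - v| := by
  have key : ∀ x ∈ Set.Ici (1:ℝ), HasDerivWithinAt (fun x : ℝ => Complex.exp (c * (Real.log x : ℂ)))
      (Complex.exp (c * (Real.log x : ℂ)) * (c * (x⁻¹ : ℝ))) (Set.Ici 1) x := by
    intro x hx
    have hx0 : x ≠ 0 := by have : (1:ℝ) ≤ x := hx; linarith
    have h1 : HasDerivAt (fun x : ℝ => ((Real.log x : ℝ) : ℂ)) ((x⁻¹ : ℝ) : ℂ) x :=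
      (Real.hasDerivAt_log hx0).ofReal_comp
    have h2 : HasDerivAt (fun x : ℝ => c * (Real.log x : ℂ)) (c * ((x⁻¹ : ℝ) : ℂ)) x := h1.const_mul c
    exact h2.cexp.hasDerivWithinAt
  have bound : ∀ x ∈ Set.Ici (1:ℝ), ‖Complex.exp (c * (Real.log x : ℂ)) * (c * ((x⁻¹:ℝ) : ℂ))‖ ≤ ‖c‖ := by
    intro x hx
    have hx1 : (1:ℝ) ≤ x := hx
    have hlog : 0 ≤ Real.log x := Real.log_nonneg hx1
    have hre : (c * ((Real.log x : ℝ) : ℂ)).re = c.re * Real.log x := by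
      simp [Complex.mul_re]
    have hne : ‖Complex.exp (c * ((Real.log x : ℝ) : ℂ))‖ ≤ 1 := by
      rw [Complex.norm_exp, hre]
      exact Real.exp_le_one_iff.mpr (mul_nonpos_of_nonpos_of_nonneg hc hlog)
    have hinv : ‖(((x⁻¹:ℝ)) : ℂ)‖ ≤ 1 := by
      rw [Complex.norm_real, Real.norm_eq_abs, _root_.abs_of_nonneg (by positivity)]
      exact inv_le_one_of_one_le₀ hx1
    calc ‖Complex.exp (c * (Real.log x : ℂ)) * (c * ((x⁻¹:ℝ) : ℂ))‖
        = ‖Complex.exp (c * (Real.log x : ℂ))‖ * (‖c‖ * ‖(((x⁻¹:ℝ)) : ℂ)‖) := by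
          rw [norm_mul, norm_mul]
      _ ≤ 1 * (‖c‖ * 1) := by
          apply mul_le_mul hne (mul_le_mul_of_nonneg_left hinv (norm_nonneg c)) (by positivity) one_pos.le
      _ = ‖c‖ := by ring
  have := (convex_Ici (1:ℝ)).norm_image_sub_le_of_norm_hasDerivWithin_le key bound hv hu
  simpa [Real.norm_eq_abs, abs_sub_comm] using this

private lemma sqrt_exp_log' {u : ℝ} (hu : 1 ≤ u) : Real.sqrt u = Real.exp (Real.log u / 2) := by
  have hupos : 0 < u := by linarith
  rw [Real.sqrt_eq_rpow, Real.rpow_def_of_pos hupos]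
  ring_nf

private lemma psi_eq (R μ Δt : ℝ) (hR : 0 < R) (ht : 0 < Δt) (z : ℂ) :
    PsiFlow R μ Δt z =
      (((Real.exp (R * Δt) : ℂ) *
        Complex.exp ((-(1 + (μ:ℂ) * I)/2) * (Real.log (alphaGL R Δt * ‖z‖ ^ 2 + 1) : ℂ)) - 1) / (Δt : ℂ)) * z := by
  have hα : 0 ≤ alphaGL R Δt := by
    have : (1:ℝ) ≤ Real.exp (2 * R * Δt) := Real.one_le_exp (by positivity)
    unfold alphaGL
    have h2 : (0:ℝ) ≤ Real.exp (2 * R * Δt) - 1 := by linarith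
    positivity
  set u : ℝ := alphaGL R Δt * ‖z‖ ^ 2 + 1 with hudef
  have hu : 1 ≤ u := by
    have : 0 ≤ alphaGL R Δt * ‖z‖ ^ 2 := by positivity
    show (1:ℝ) ≤ alphaGL R Δt * ‖z‖ ^ 2 + 1
    linarith
  set L : ℝ := Real.log u with hL
  have hsplit : (-(1 + (μ:ℂ) * I)/2) * (L : ℂ) = ((-(L/2) : ℝ) : ℂ) + (-I * ((μ:ℝ) / 2) * (L : ℂ)) := by
    push_cast; ring
  have hexp : Complex.exp ((-(1 + (μ:ℂ) * I)/2) * (L : ℂ)) =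
      (((Real.sqrt u)⁻¹ : ℝ) : ℂ) * Complex.exp (-I * ((μ:ℝ) / 2) * (L : ℂ)) := by
    rw [hsplit, Complex.exp_add, ← Complex.ofReal_exp]
    congr 2
    rw [sqrt_exp_log' hu, ← Real.exp_neg]
  unfold PsiFlow PhiFlow
  rw [← hudef, ← hL, hexp]
  have hsqne : ((Real.sqrt u : ℝ) : ℂ) ≠ 0 := by
    exact_mod_cast (Real.sqrt_pos.mpr (by linarith : (0:ℝ) < u)).ne'
  have hDt : ((Δt : ℝ) : ℂ) ≠ 0 := by exact_mod_cast ht.ne'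
  field_simp
  rw [Complex.ofReal_div, Complex.ofReal_one, mul_one_div, div_sub_one hsqne, mul_div_assoc', eq_div_iff hsqne]
  ring

private lemma final_arith (M E r a b d x k1 kd : ℝ)
    (hM : 0 ≤ M) (hE : 0 ≤ E) (hr : 0 ≤ r) (ha : 0 ≤ a) (hb : 0 ≤ b) (hd : 0 ≤ d)
    (hx : x ≤ k1 * d + kd * b)
    (hk1 : k1 * d ≤ (2 * M * E * a ^ 2 + r) * d)
    (hkd : kd * b ≤ (2 * M * E * (a + b) * d) * b) :
    x ≤ (6 * (M + 1) * E + r) * (1 + a ^ 2 + b ^ 2) * d := by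
  nlinarith [mul_nonneg (mul_nonneg (mul_nonneg hM hE) hd) (sq_nonneg (a - b)),
    mul_nonneg (mul_nonneg hM hE) hd,
    mul_nonneg (mul_nonneg (mul_nonneg hM hE) hd) (sq_nonneg a),
    mul_nonneg (mul_nonneg (mul_nonneg hM hE) hd) (sq_nonneg b),
    mul_nonneg (mul_nonneg hE hd) (sq_nonneg a),
    mul_nonneg (mul_nonneg hE hd) (sq_nonneg b),
    mul_nonneg hE hd,
    mul_nonneg (mul_nonneg hr hd) (sq_nonneg a),
    mul_nonneg (mul_nonneg hr hd) (sq_nonneg b)]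

theorem stmt12 (R μ : ℝ) (hR : 0 < R) :
    ∃ C : ℝ, 0 < C ∧ ∀ Δt : ℝ, Δt ∈ Set.Ioo (0 : ℝ) 1 → ∀ z₁ z₂ : ℂ,
      ‖PsiFlow R μ Δt z₁ - PsiFlow R μ Δt z₂‖ ≤
        C * (1 + ‖z₁‖ ^ 2 + ‖z₂‖ ^ 2) * ‖z₁ - z₂‖ := by
  set c : ℂ := -(1 + (μ:ℂ) * I)/2 with hcdef
  set M : ℝ := ‖c‖ with hMdef
  have hM0 : 0 ≤ M := norm_nonneg c
  have hcre : c.re ≤ 0 := by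
    rw [hcdef]
    norm_num [Complex.div_re]
  set eR : ℝ := Real.exp R with heR
  set e2R : ℝ := Real.exp (2*R) with he2R
  set e3R : ℝ := Real.exp (3*R) with he3R
  have heR0 : 0 < eR := Real.exp_pos R
  have he2R0 : 0 < e2R := Real.exp_pos _
  have he3R0 : 0 < e3R := Real.exp_pos _
  have hprod : eR * e2R = e3R := by
    rw [heR, he2R, he3R, ← Real.exp_add]; ring_nf
  refine ⟨6 * (M + 1) * e3R + R * eR, by positivity, ?_⟩
  rintro Δt ⟨ht0, ht1⟩ z₁ z₂
  set α : ℝ := alphaGL R Δt with hαdef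
  have hα0 : 0 ≤ α := by
    have : (1:ℝ) ≤ Real.exp (2 * R * Δt) := Real.one_le_exp (by positivity)
    rw [hαdef]
    unfold alphaGL
    have h2 : (0:ℝ) ≤ Real.exp (2 * R * Δt) - 1 := by linarith
    positivity
  have hαle : α ≤ 2 * Δt * e2R := by
    have h1 := exp_sub_one_le' (2*R*Δt)
    have h2 : Real.exp (2*R*Δt) ≤ e2R := by
      rw [he2R]; exact Real.exp_le_exp.mpr (by nlinarith)
    have h3 : Real.exp (2*R*Δt) - 1 ≤ 2*R*Δt*e2R := by
      have h4 : 2*R*Δt*Real.exp (2*R*Δt) ≤ 2*R*Δt*e2R :=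
        mul_le_mul_of_nonneg_left h2 (by positivity)
      linarith
    rw [hαdef]
    unfold alphaGL
    rw [div_le_iff₀ hR]
    nlinarith
  set E : ℝ := Real.exp (R * Δt) with hEdef
  have hE1 : 1 ≤ E := Real.one_le_exp (by positivity)
  have hEle : E ≤ eR := by
    rw [hEdef, heR]; exact Real.exp_le_exp.mpr (by nlinarith)
  have hEsub : E - 1 ≤ R * Δt * eR := by
    have h1 := exp_sub_one_le' (R*Δt)
    nlinarith [Real.exp_pos (R*Δt)]
  set u₁ : ℝ := α * ‖z₁‖ ^ 2 + 1 with hu1def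
  set u₂ : ℝ := α * ‖z₂‖ ^ 2 + 1 with hu2def
  have hu₁ : 1 ≤ u₁ := by rw [hu1def]; nlinarith [sq_nonneg ‖z₁‖, norm_nonneg z₁]
  have hu₂ : 1 ≤ u₂ := by rw [hu2def]; nlinarith [sq_nonneg ‖z₂‖, norm_nonneg z₂]
  set H₁ : ℂ := Complex.exp (c * (Real.log u₁ : ℂ)) with hH1def
  set H₂ : ℂ := Complex.exp (c * (Real.log u₂ : ℂ)) with hH2def
  set K₁ : ℂ := ((E : ℂ) * H₁ - 1) / (Δt : ℂ) with hK1def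
  set K₂ : ℂ := ((E : ℂ) * H₂ - 1) / (Δt : ℂ) with hK2def
  have hpsi1 : PsiFlow R μ Δt z₁ = K₁ * z₁ := psi_eq R μ Δt hR ht0 z₁
  have hpsi2 : PsiFlow R μ Δt z₂ = K₂ * z₂ := psi_eq R μ Δt hR ht0 z₂
  -- Lipschitz bounds on H
  have hHone : Complex.exp (c * ((Real.log 1 : ℝ) : ℂ)) = 1 := by simp
  have hH1bound : ‖H₁ - 1‖ ≤ M * (α * ‖z₁‖ ^ 2) := by
    have := H_lip c hcre hu₁ (le_refl (1:ℝ))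
    rw [hHone] at this
    have h2 : |u₁ - 1| = α * ‖z₁‖ ^ 2 := by
      rw [_root_.abs_of_nonneg (by nlinarith)] ; rw [hu1def]; ring
    rw [h2] at this
    exact this
  have hHdiff : ‖H₁ - H₂‖ ≤ M * |u₁ - u₂| := H_lip c hcre hu₁ hu₂
  -- normalize norms of K
  have hDtabs : ‖((Δt:ℝ) : ℂ)‖ = Δt := by
    rw [Complex.norm_real, Real.norm_eq_abs, _root_.abs_of_pos ht0]
  have hEabs : ‖((E:ℝ) : ℂ)‖ = E := by
    rw [Complex.norm_real, Real.norm_eq_abs, _root_.abs_of_pos (by linarith)]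
  -- bound on ‖K₁‖
  have hKbound : ‖K₁‖ ≤ 2 * M * e3R * ‖z₁‖ ^ 2 + R * eR := by
    have hnum : ‖(E : ℂ) * H₁ - 1‖ ≤ E * ‖H₁ - 1‖ + (E - 1) := by
      calc ‖(E : ℂ) * H₁ - 1‖ = ‖(E : ℂ) * (H₁ - 1) + ((E : ℂ) - 1)‖ := by congr 1; ring
        _ ≤ ‖(E : ℂ) * (H₁ - 1)‖ + ‖((E : ℂ) - 1)‖ := norm_add_le _ _
        _ = E * ‖H₁ - 1‖ + (E - 1) := by
            rw [norm_mul, hEabs]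
            congr 1
            have : ((E:ℝ) : ℂ) - 1 = (((E - 1 : ℝ)) : ℂ) := by push_cast; ring
            rw [this, Complex.norm_real, Real.norm_eq_abs, _root_.abs_of_nonneg (by linarith)]
    have hnum2 : ‖(E : ℂ) * H₁ - 1‖ ≤ Δt * (2 * M * e3R * ‖z₁‖ ^ 2 + R * eR) := by
      have ha : E * ‖H₁ - 1‖ ≤ eR * (M * (α * ‖z₁‖ ^ 2)) :=
        mul_le_mul hEle hH1bound (norm_nonneg _) heR0.le
      have hb : eR * (M * (α * ‖z₁‖ ^ 2)) ≤ eR * (M * (2 * Δt * e2R * ‖z₁‖ ^ 2)) := by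
        apply mul_le_mul_of_nonneg_left _ heR0.le
        apply mul_le_mul_of_nonneg_left _ hM0
        exact mul_le_mul_of_nonneg_right hαle (sq_nonneg _)
      have hkey : eR * (M * (2 * Δt * e2R * ‖z₁‖ ^ 2)) = Δt * (2 * M * e3R * ‖z₁‖ ^ 2) := by
        rw [← hprod]; ring
      linarith
    rw [hK1def, norm_div, hDtabs, div_le_iff₀ ht0]
    linarith [hnum2]
  -- bound on ‖K₁ - K₂‖
  have hKdiff : ‖K₁ - K₂‖ ≤ 2 * M * e3R * (‖z₁‖ + ‖z₂‖) * ‖z₁ - z₂‖ := by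
    have heq : K₁ - K₂ = (E : ℂ) * (H₁ - H₂) / (Δt : ℂ) := by
      rw [hK1def, hK2def]; ring
    have hudiff : |u₁ - u₂| ≤ α * ((‖z₁‖ + ‖z₂‖) * ‖z₁ - z₂‖) := by
      have h1 : u₁ - u₂ = α * (‖z₁‖ ^ 2 - ‖z₂‖ ^ 2) := by rw [hu1def, hu2def]; ring
      have h2 : |‖z₁‖ ^ 2 - ‖z₂‖ ^ 2| ≤ (‖z₁‖ + ‖z₂‖) * ‖z₁ - z₂‖ := by
        have h3 : |‖z₁‖ - ‖z₂‖| ≤ ‖z₁ - z₂‖ := abs_norm_sub_norm_le z₁ z₂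
        have h4 : |‖z₁‖ ^ 2 - ‖z₂‖ ^ 2| = (‖z₁‖ + ‖z₂‖) * |‖z₁‖ - ‖z₂‖| := by
          rw [show ‖z₁‖ ^ 2 - ‖z₂‖ ^ 2 = (‖z₁‖ + ‖z₂‖) * (‖z₁‖ - ‖z₂‖) by ring, abs_mul,
            _root_.abs_of_nonneg (by positivity)]
        rw [h4]
        exact mul_le_mul_of_nonneg_left h3 (by positivity)
      rw [h1, abs_mul, _root_.abs_of_nonneg hα0]
      exact mul_le_mul_of_nonneg_left h2 hα0
    rw [heq, norm_div, norm_mul, hEabs, hDtabs, div_le_iff₀ ht0]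
    have hc1 : E * ‖H₁ - H₂‖ ≤ eR * (M * (α * ((‖z₁‖ + ‖z₂‖) * ‖z₁ - z₂‖))) := by
      apply mul_le_mul hEle _ (norm_nonneg _) heR0.le
      calc ‖H₁ - H₂‖ ≤ M * |u₁ - u₂| := hHdiff
        _ ≤ M * (α * ((‖z₁‖ + ‖z₂‖) * ‖z₁ - z₂‖)) := mul_le_mul_of_nonneg_left hudiff hM0
    have hc2 : eR * (M * (α * ((‖z₁‖ + ‖z₂‖) * ‖z₁ - z₂‖))) ≤
        eR * (M * (2 * Δt * e2R * ((‖z₁‖ + ‖z₂‖) * ‖z₁ - z₂‖))) := by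
      apply mul_le_mul_of_nonneg_left _ heR0.le
      apply mul_le_mul_of_nonneg_left _ hM0
      apply mul_le_mul_of_nonneg_right hαle
      positivity
    have hkey2 : eR * (M * (2 * Δt * e2R * ((‖z₁‖ + ‖z₂‖) * ‖z₁ - z₂‖))) =
        2 * M * e3R * (‖z₁‖ + ‖z₂‖) * ‖z₁ - z₂‖ * Δt := by
      rw [← hprod]; ring
    linarith
  -- final assembly
  rw [hpsi1, hpsi2]
  have hsplit : ‖K₁ * z₁ - K₂ * z₂‖ ≤ ‖K₁‖ * ‖z₁ - z₂‖ + ‖K₁ - K₂‖ * ‖z₂‖ := by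
    calc ‖K₁ * z₁ - K₂ * z₂‖ = ‖K₁ * (z₁ - z₂) + (K₁ - K₂) * z₂‖ := by congr 1; ring
      _ ≤ ‖K₁ * (z₁ - z₂)‖ + ‖(K₁ - K₂) * z₂‖ := norm_add_le _ _
      _ = ‖K₁‖ * ‖z₁ - z₂‖ + ‖K₁ - K₂‖ * ‖z₂‖ := by rw [norm_mul, norm_mul]
  exact final_arith M e3R (R * eR) ‖z₁‖ ‖z₂‖ ‖z₁ - z₂‖ _ ‖K₁‖ ‖K₁ - K₂‖
    hM0 he3R0.le (by positivity) (norm_nonneg _) (norm_nonneg _) (norm_nonneg _)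
    hsplit
    (mul_le_mul_of_nonneg_right hKbound (norm_nonneg _))
    (mul_le_mul_of_nonneg_right hKdiff (norm_nonneg _))
end

section
/- There exists C > 0 (depending only on R and μ) such that for all Δt ∈ (0,1) and all z ∈ ℂ, |Ψ_Δt(z) - Ψ₀(z)| ≤ C*Δt*e^R*(|z| + e^{4R}*|z|^5), where Ψ₀(z) = R*z - (1+iμ)|z|^2*z and Ψ_Δt(z) = (Φ_Δt(z)-z)/Δt. -/
open Complex

/-! With `s = |z|²` and `a(t) = α(t) s + 1`, the flow map is `Φ_t(z) = g(t) z`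
where `g(t) = exp (R t - (1 + iμ)/2 · log a(t))`. Then `g(0) = 1` and `g'(0) = R - (1 + iμ) s`,
so `Ψ_Δt(z) - Ψ₀(z) = (g(Δt) - g(0) - Δt g'(0)) / Δt · z`, and the second-order Taylor bound
reduces the claim to `|g''| ≤ C e^R (1 + e^{4R} s²)` on `[0, 1]`. -/

open Set

theorem norm_sub_sub_smul_le_of_norm_deriv2_le {E : Type*} [NormedAddCommGroup E]
    [NormedSpace ℝ E] {f f' f'' : ℝ → E} {a b M : ℝ} (hab : a ≤ b)
    (hf : ∀ x ∈ Icc a b, HasDerivWithinAt f (f' x) (Icc a b) x)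
    (hf' : ∀ x ∈ Icc a b, HasDerivWithinAt f' (f'' x) (Icc a b) x)
    (hM : ∀ x ∈ Icc a b, ‖f'' x‖ ≤ M) :
    ‖f b - f a - (b - a) • f' a‖ ≤ M * (b - a) ^ 2 := by
  have ha : a ∈ Icc a b := left_mem_Icc.2 hab
  have hM0 : 0 ≤ M := (norm_nonneg _).trans (hM a ha)
  have hf'_lip : ∀ x ∈ Icc a b, ‖f' x - f' a‖ ≤ M * (b - a) := fun x hx =>
    (norm_image_sub_le_of_norm_deriv_le_segment' hf'
      (fun y hy => hM y (Ico_subset_Icc_self hy)) x hx).trans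
      (by gcongr; exact hx.2)
  have hg : ∀ x ∈ Icc a b, HasDerivWithinAt (fun y => f y - (y - a) • f' a)
      (f' x - f' a) (Icc a b) x := fun x hx => by
    simpa using (hf x hx).fun_sub (((hasDerivWithinAt_id x _).sub_const a).smul_const (f' a))
  have := norm_image_sub_le_of_norm_deriv_le_segment' hg
    (fun y hy => hf'_lip y (Ico_subset_Icc_self hy)) b (right_mem_Icc.2 hab)
  simpa [sq, mul_assoc, sub_right_comm] using this

lemma norm_sq_sub_two_mul_le (c : ℂ) {R p y : ℝ} (hR : 0 ≤ R) (hp : 0 ≤ p) (hpy : p ≤ y) :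
    ‖(R - c * p) ^ 2 - 2 * c * p * (R - p)‖ ≤ ((R + ‖c‖) ^ 2 + 2 * ‖c‖) * (1 + y ^ 2) := by
  have h₁ : ‖(R : ℂ) - c * p‖ ≤ R + ‖c‖ * p := (norm_sub_le _ _).trans
    (by simp [abs_of_nonneg hR, abs_of_nonneg hp])
  have h₂ : ‖(R : ℂ) - p‖ ≤ R + p := by
    rw [← Complex.ofReal_sub, Complex.norm_real, Real.norm_eq_abs, abs_le]
    constructor <;> linarith
  have hc := norm_nonneg c
  calc ‖(R - c * p) ^ 2 - 2 * c * p * (R - p)‖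
      ≤ ‖(R : ℂ) - c * p‖ ^ 2 + 2 * ‖c‖ * p * ‖(R : ℂ) - p‖ := by
        refine (norm_sub_le _ _).trans_eq ?_
        simp [abs_of_nonneg hp]
    _ ≤ (R + ‖c‖ * p) ^ 2 + 2 * ‖c‖ * p * (R + p) := by gcongr
    _ ≤ ((R + ‖c‖) ^ 2 + 2 * ‖c‖) * (1 + y ^ 2) := by
        have hp2 : p ^ 2 ≤ y ^ 2 := pow_le_pow_left₀ hp hpy 2
        have hRc := mul_nonneg hR hc
        nlinarith [mul_nonneg hRc (sq_nonneg (1 - p)), mul_nonneg hRc (sub_nonneg.2 hp2),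
          mul_nonneg (add_nonneg (sq_nonneg ‖c‖) (mul_nonneg zero_le_two hc)) (sub_nonneg.2 hp2),
          mul_nonneg (sq_nonneg R) (sq_nonneg y)]

noncomputable def flowDenom (R s t : ℝ) : ℝ := alphaGL R t * s + 1

-- `|Φ_t(z)|²` for `s = |z|²`; `flowFactor` solves `g' = g (R - (1 + iμ) flowNormSq)`, the ODE.
noncomputable def flowNormSq (R s t : ℝ) : ℝ := Real.exp (2 * R * t) * s / flowDenom R s t

noncomputable def flowFactor (R μ s t : ℝ) : ℂ :=
  Complex.exp ((R * t : ℝ) - (1 + μ * I) / 2 * (Real.log (flowDenom R s t) : ℂ))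

section
variable {R μ s t : ℝ}

lemma one_le_flowDenom (hR : 0 < R) (hs : 0 ≤ s) (ht : 0 ≤ t) : 1 ≤ flowDenom R s t := by
  have : 0 ≤ alphaGL R t :=
    div_nonneg (sub_nonneg.2 (Real.one_le_exp (by positivity))) hR.le
  unfold flowDenom
  nlinarith

lemma flowDenom_pos (hR : 0 < R) (hs : 0 ≤ s) (ht : 0 ≤ t) : 0 < flowDenom R s t :=
  one_pos.trans_le (one_le_flowDenom hR hs ht)

lemma hasDerivAt_flowDenom (hR : R ≠ 0) :
    HasDerivAt (flowDenom R s) (2 * Real.exp (2 * R * t) * s) t := by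
  have hexp : HasDerivAt (fun t => Real.exp (2 * R * t)) (Real.exp (2 * R * t) * (2 * R)) t := by
    simpa using ((hasDerivAt_id t).const_mul (2 * R)).exp
  refine ((((hexp.sub_const 1).div_const R).mul_const s).add_const 1).congr_deriv ?_
  field_simp

lemma hasDerivAt_flowNormSq (hR : R ≠ 0) (ha : flowDenom R s t ≠ 0) :
    HasDerivAt (flowNormSq R s) (2 * flowNormSq R s t * (R - flowNormSq R s t)) t := by
  have hexp : HasDerivAt (fun t => Real.exp (2 * R * t)) (Real.exp (2 * R * t) * (2 * R)) t := by
    simpa using ((hasDerivAt_id t).const_mul (2 * R)).exp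
  refine ((hexp.mul_const s).div (hasDerivAt_flowDenom hR) ha).congr_deriv ?_
  unfold flowNormSq
  field_simp

lemma hasDerivAt_flowFactor (hR : R ≠ 0) (ha : 0 < flowDenom R s t) :
    HasDerivAt (flowFactor R μ s)
      (flowFactor R μ s t * (R - (1 + μ * I) * flowNormSq R s t)) t := by
  have hlin : HasDerivAt (fun t : ℝ => ((R * t : ℝ) : ℂ)) R t := by
    simpa using ((hasDerivAt_id t).const_mul R).ofReal_comp
  have hlog := ((Real.hasDerivAt_log ha.ne').comp t (hasDerivAt_flowDenom (s := s) hR)).ofReal_comp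
  refine (hlin.fun_sub (hlog.const_mul ((1 + μ * I) / 2))).cexp.congr_deriv ?_
  unfold flowFactor flowNormSq
  push_cast
  simp only [Function.comp_apply]
  field_simp

lemma hasDerivAt_flowFactor_mul (hR : R ≠ 0) (ha : 0 < flowDenom R s t) :
    HasDerivAt (fun t => flowFactor R μ s t * (R - (1 + μ * I) * flowNormSq R s t))
      (flowFactor R μ s t * ((R - (1 + μ * I) * flowNormSq R s t) ^ 2
        - 2 * (1 + μ * I) * flowNormSq R s t * (R - flowNormSq R s t))) t := by
  have hq := (hasDerivAt_flowNormSq hR ha.ne').ofReal_comp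
  refine ((hasDerivAt_flowFactor (μ := μ) hR ha).mul
    ((hasDerivAt_const t (R : ℂ)).fun_sub (hq.const_mul (1 + μ * I)))).congr_deriv ?_
  push_cast
  ring

lemma flowDenom_zero (R s : ℝ) : flowDenom R s 0 = 1 := by
  simp [flowDenom, alphaGL]

lemma flowNormSq_zero (R s : ℝ) : flowNormSq R s 0 = s := by
  simp [flowNormSq, flowDenom_zero]

lemma flowFactor_zero (R μ s : ℝ) : flowFactor R μ s 0 = 1 := by
  simp [flowFactor, flowDenom_zero]

lemma norm_flowFactor_le (hR : 0 < R) (hs : 0 ≤ s) (ht₀ : 0 ≤ t) (ht₁ : t ≤ 1) :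
    ‖flowFactor R μ s t‖ ≤ Real.exp R := by
  have hlog : 0 ≤ Real.log (flowDenom R s t) := Real.log_nonneg (one_le_flowDenom hR hs ht₀)
  rw [flowFactor, Complex.norm_exp, Real.exp_le_exp]
  have hre : (((R * t : ℝ) : ℂ) - (1 + μ * I) / 2 * (Real.log (flowDenom R s t) : ℂ)).re
      = R * t - Real.log (flowDenom R s t) / 2 := by
    simp only [ofReal_mul, sub_re, mul_re, ofReal_re, ofReal_im, mul_zero, sub_zero,
      div_ofNat_re, div_ofNat_im, add_re, add_im, one_re, one_im, I_re, I_im, mul_one, sub_self,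
      add_zero, zero_add, one_div, sub_right_inj]
    ring
  rw [hre]
  nlinarith

lemma flowNormSq_nonneg (hR : 0 < R) (hs : 0 ≤ s) (ht : 0 ≤ t) : 0 ≤ flowNormSq R s t :=
  div_nonneg (by positivity) (flowDenom_pos hR hs ht).le

lemma flowNormSq_le (hR : 0 < R) (hs : 0 ≤ s) (ht₀ : 0 ≤ t) (ht₁ : t ≤ 1) :
    flowNormSq R s t ≤ Real.exp (2 * R) * s :=
  calc flowNormSq R s t ≤ Real.exp (2 * R * t) * s :=
        div_le_self (by positivity) (one_le_flowDenom hR hs ht₀)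
    _ ≤ Real.exp (2 * R) * s :=
        mul_le_mul_of_nonneg_right (Real.exp_le_exp.2 (by nlinarith)) hs

lemma norm_flowFactor_deriv2_le (hR : 0 < R) (hs : 0 ≤ s) (ht₀ : 0 ≤ t) (ht₁ : t ≤ 1) :
    ‖flowFactor R μ s t * ((R - (1 + μ * I) * flowNormSq R s t) ^ 2
        - 2 * (1 + μ * I) * flowNormSq R s t * (R - flowNormSq R s t))‖ ≤
      Real.exp R * (((R + ‖1 + μ * I‖) ^ 2 + 2 * ‖1 + μ * I‖) * (1 + Real.exp (4 * R) * s ^ 2)) := by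
  have hexp : Real.exp (4 * R) * s ^ 2 = (Real.exp (2 * R) * s) ^ 2 := by
    rw [mul_pow, ← Real.exp_nat_mul]; ring_nf
  rw [norm_mul, hexp]
  exact mul_le_mul (norm_flowFactor_le hR hs ht₀ ht₁)
    (norm_sq_sub_two_mul_le _ hR.le (flowNormSq_nonneg hR hs ht₀) (flowNormSq_le hR hs ht₀ ht₁))
    (norm_nonneg _) (Real.exp_pos R).le

lemma norm_flowFactor_sub_taylor_le (hR : 0 < R) (hs : 0 ≤ s) (ht₀ : 0 ≤ t) (ht₁ : t ≤ 1) :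
    ‖flowFactor R μ s t - 1 - t * (R - (1 + μ * I) * s)‖ ≤
      Real.exp R * (((R + ‖1 + μ * I‖) ^ 2 + 2 * ‖1 + μ * I‖) * (1 + Real.exp (4 * R) * s ^ 2))
        * t ^ 2 := by
  have hpos : ∀ x ∈ Icc 0 t, 0 < flowDenom R s x := fun x hx => flowDenom_pos hR hs hx.1
  have := norm_sub_sub_smul_le_of_norm_deriv2_le ht₀
    (fun x hx => (hasDerivAt_flowFactor (μ := μ) hR.ne' (hpos x hx)).hasDerivWithinAt)
    (fun x hx => (hasDerivAt_flowFactor_mul hR.ne' (hpos x hx)).hasDerivWithinAt)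
    (fun x hx => norm_flowFactor_deriv2_le hR hs hx.1 (hx.2.trans ht₁))
  simpa [flowFactor_zero, flowNormSq_zero, Complex.real_smul] using this

lemma PhiFlow_eq_flowFactor_mul (z : ℂ) (ha : 0 < flowDenom R (‖z‖ ^ 2) t) :
    PhiFlow R μ t z = flowFactor R μ (‖z‖ ^ 2) t * z := by
  have hsqrt : Real.sqrt (flowDenom R (‖z‖ ^ 2) t) =
      Real.exp (Real.log (flowDenom R (‖z‖ ^ 2) t) / 2) := by
    rw [Real.sqrt_eq_rpow, Real.rpow_def_of_pos ha]
    ring_nf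
  rw [PhiFlow, flowFactor, ← flowDenom, hsqrt, Complex.ofReal_exp, Complex.ofReal_exp,
    ← Complex.exp_sub, ← Complex.exp_add]
  congr 2
  push_cast
  ring

lemma PsiFlow_sub_Psi0 (z : ℂ) (ht : t ≠ 0) (ha : 0 < flowDenom R (‖z‖ ^ 2) t) :
    PsiFlow R μ t z - Psi0 R μ z =
      (flowFactor R μ (‖z‖ ^ 2) t - 1 - t * (R - (1 + μ * I) * (‖z‖ ^ 2 : ℝ))) / t * z := by
  have ht' : (t : ℂ) ≠ 0 := by exact_mod_cast ht
  rw [PsiFlow, Psi0, PhiFlow_eq_flowFactor_mul z ha]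
  push_cast
  field_simp

end

theorem stmt13 (R μ : ℝ) (hR : 0 < R) :
    ∃ C : ℝ, 0 < C ∧ ∀ Δt : ℝ, Δt ∈ Set.Ioo (0 : ℝ) 1 → ∀ z : ℂ,
      ‖PsiFlow R μ Δt z - Psi0 R μ z‖ ≤
        C * Δt * Real.exp R * (‖z‖ + Real.exp (4 * R) * ‖z‖ ^ 5) := by
  refine ⟨(R + ‖1 + μ * I‖) ^ 2 + 2 * ‖1 + μ * I‖, by positivity, fun Δt ⟨hΔt₀, hΔt₁⟩ z => ?_⟩
  have hs : 0 ≤ ‖z‖ ^ 2 := sq_nonneg _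
  rw [PsiFlow_sub_Psi0 z hΔt₀.ne' (flowDenom_pos hR hs hΔt₀.le), norm_mul, norm_div,
    Complex.norm_real, Real.norm_of_nonneg hΔt₀.le]
  calc _ ≤ Real.exp R * (((R + ‖1 + μ * I‖) ^ 2 + 2 * ‖1 + μ * I‖) *
          (1 + Real.exp (4 * R) * (‖z‖ ^ 2) ^ 2)) * Δt ^ 2 / Δt * ‖z‖ := by
        gcongr
        exact norm_flowFactor_sub_taylor_le hR hs hΔt₀.le hΔt₁.le
    _ = _ := by
        field_simp
end

section
/- For u ∈ H¹(𝕋) on the one-dimensional torus, the Gagliardo–Nirenberg-type bound ‖u‖_{L⁶}³ ≤ C ‖u‖_{L²}² ‖u‖_{H¹} holds for some universal constant C > 0. -/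
open intervalIntegral MeasureTheory Set

lemma my_cs {f g : ℝ → ℝ} (hf : Continuous f) (hg : Continuous g) :
    (∫ x in (0:ℝ)..1, f x * g x) ≤
      Real.sqrt (∫ x in (0:ℝ)..1, f x ^ 2) * Real.sqrt (∫ x in (0:ℝ)..1, g x ^ 2) := by
  set A := ∫ x in (0:ℝ)..1, f x ^ 2 with hA
  set B := ∫ x in (0:ℝ)..1, f x * g x with hB
  set C := ∫ x in (0:ℝ)..1, g x ^ 2 with hC
  have hAnn : 0 ≤ A := intervalIntegral.integral_nonneg (by norm_num) (fun x _ => sq_nonneg _)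
  have hCnn : 0 ≤ C := intervalIntegral.integral_nonneg (by norm_num) (fun x _ => sq_nonneg _)
  have hq : ∀ t : ℝ, 0 ≤ C * (t * t) + (2 * B) * t + A := by
    intro t
    have h0 : 0 ≤ ∫ x in (0:ℝ)..1, (f x + t * g x) ^ 2 :=
      intervalIntegral.integral_nonneg (by norm_num) (fun x _ => sq_nonneg _)
    have hre : (∫ x in (0:ℝ)..1, (f x + t * g x) ^ 2)
        = A + (2 * t) * B + t ^ 2 * C := by
      have hfg : IntervalIntegrable (fun x => f x * g x) volume 0 1 :=
        (hf.mul hg).intervalIntegrable 0 1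
      have hf2 : IntervalIntegrable (fun x => f x ^ 2) volume 0 1 :=
        (hf.pow 2).intervalIntegrable 0 1
      have hg2 : IntervalIntegrable (fun x => g x ^ 2) volume 0 1 :=
        (hg.pow 2).intervalIntegrable 0 1
      have : ∀ x, (f x + t * g x) ^ 2
          = f x ^ 2 + ((2 * t) * (f x * g x) + t ^ 2 * g x ^ 2) := fun x => by ring
      simp_rw [this]
      rw [intervalIntegral.integral_add hf2 ((hfg.const_mul _).add (hg2.const_mul _)),
        intervalIntegral.integral_add (hfg.const_mul _) (hg2.const_mul _),
        intervalIntegral.integral_const_mul, intervalIntegral.integral_const_mul]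
      ring
    nlinarith [h0, hre]
  have hd := discrim_le_zero hq
  rw [discrim] at hd
  have hBsq : B ^ 2 ≤ A * C := by nlinarith
  calc B ≤ |B| := le_abs_self B
    _ = Real.sqrt (B ^ 2) := (Real.sqrt_sq_eq_abs B).symm
    _ ≤ Real.sqrt (A * C) := Real.sqrt_le_sqrt hBsq
    _ = Real.sqrt A * Real.sqrt C := Real.sqrt_mul hAnn _


/-- Gagliardo–Nirenberg on the 1D torus: `‖u‖_{L⁶}³ ≤ C ‖u‖_{L²}² ‖u‖_{H¹}`,
for `1`-periodic `C¹` functions `u : ℝ → ℂ`, with the norms written as integrals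
over one period `[0,1]`. -/
theorem stmt18 :
    ∃ C : ℝ, 0 < C ∧ ∀ u : ℝ → ℂ, ContDiff ℝ 1 u → (∀ x, u (x + 1) = u x) →
      (∫ x in (0 : ℝ)..1, ‖u x‖ ^ 6) ^ ((1 : ℝ) / 2) ≤
        C * (∫ x in (0 : ℝ)..1, ‖u x‖ ^ 2) *
          ((∫ x in (0 : ℝ)..1, ‖u x‖ ^ 2 + ‖deriv u x‖ ^ 2) ^ ((1 : ℝ) / 2)) := by
  refine ⟨5, by norm_num, fun u hu _ => ?_⟩
  have hcu : Continuous u := hu.continuous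
  have hcu' : Continuous (deriv u) := hu.continuous_deriv le_rfl
  have hcnu : Continuous fun x => ‖u x‖ := hcu.norm
  have hcnu' : Continuous fun x => ‖deriv u x‖ := hcu'.norm
  set a := ∫ x in (0:ℝ)..1, ‖u x‖ ^ 2 with ha
  set b := ∫ x in (0:ℝ)..1, ‖deriv u x‖ ^ 2 with hb
  have hann : 0 ≤ a := intervalIntegral.integral_nonneg (by norm_num) (fun x _ => by positivity)
  have hbnn : 0 ≤ b := intervalIntegral.integral_nonneg (by norm_num) (fun x _ => by positivity)
  -- the squared-modulus function and its derivative
  set g : ℝ → ℝ := fun x => (u x).re ^ 2 + (u x).im ^ 2 with hg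
  set φ : ℝ → ℝ := fun x =>
    2 * (u x).re * (deriv u x).re + 2 * (u x).im * (deriv u x).im with hφ
  have hgn : ∀ x, g x = ‖u x‖ ^ 2 := by
    intro x
    have h : ‖u x‖ ^ 2 = Complex.normSq (u x) := by
      rw [Complex.sq_norm]
    rw [hg]
    simp only []
    rw [h, Complex.normSq_apply]
    ring
  have hgc : Continuous g := by
    exact ((Complex.continuous_re.comp hcu).pow 2).add ((Complex.continuous_im.comp hcu).pow 2)
  have hφc : Continuous φ := by
    refine (((continuous_const.mul (Complex.continuous_re.comp hcu)).mul
        (Complex.continuous_re.comp hcu')).add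
      ((continuous_const.mul (Complex.continuous_im.comp hcu)).mul
        (Complex.continuous_im.comp hcu')))
  have hder : ∀ x : ℝ, HasDerivAt g (φ x) x := by
    intro x
    have hux : HasDerivAt u (deriv u x) x :=
      ((hu.differentiable one_ne_zero) x).hasDerivAt
    have hre : HasDerivAt (fun x => (u x).re) ((deriv u x).re) x :=
      (Complex.reCLM.hasFDerivAt.comp_hasDerivAt x hux)
    have him : HasDerivAt (fun x => (u x).im) ((deriv u x).im) x :=
      (Complex.imCLM.hasFDerivAt.comp_hasDerivAt x hux)
    have : HasDerivAt g (((2:ℕ):ℝ) * (u x).re ^ (2 - 1) * (deriv u x).re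
        + ((2:ℕ):ℝ) * (u x).im ^ (2 - 1) * (deriv u x).im) x := ((hre.pow 2).add (him.pow 2))
    convert this using 1
    rw [hφ]; push_cast; ring
  have hφb : ∀ x, |φ x| ≤ 4 * (‖u x‖ * ‖deriv u x‖) := by
    intro x
    have h1 : |(u x).re| ≤ ‖u x‖ := Complex.abs_re_le_norm _
    have h2 : |(u x).im| ≤ ‖u x‖ := Complex.abs_im_le_norm _
    have h3 : |(deriv u x).re| ≤ ‖deriv u x‖ := Complex.abs_re_le_norm _
    have h4 : |(deriv u x).im| ≤ ‖deriv u x‖ := Complex.abs_im_le_norm _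
    have h5 : |φ x| ≤ 2 * (|(u x).re| * |(deriv u x).re|)
        + 2 * (|(u x).im| * |(deriv u x).im|) := by
      rw [hφ]
      calc |2 * (u x).re * (deriv u x).re + 2 * (u x).im * (deriv u x).im|
          ≤ |2 * (u x).re * (deriv u x).re| + |2 * (u x).im * (deriv u x).im| := abs_add_le _ _
        _ = 2 * (|(u x).re| * |(deriv u x).re|) + 2 * (|(u x).im| * |(deriv u x).im|) := by
            simp [abs_mul, mul_assoc]
    have hn1 : (0:ℝ) ≤ ‖u x‖ := norm_nonneg _
    have hn2 : (0:ℝ) ≤ ‖deriv u x‖ := norm_nonneg _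
    nlinarith [mul_le_mul h1 h3 (abs_nonneg _) hn1, mul_le_mul h2 h4 (abs_nonneg _) hn1]
  -- bound on ∫ |φ|
  have hIφ : (∫ x in (0:ℝ)..1, |φ x|) ≤ 4 * (Real.sqrt a * Real.sqrt b) := by
    have h1 : (∫ x in (0:ℝ)..1, |φ x|) ≤ ∫ x in (0:ℝ)..1, 4 * (‖u x‖ * ‖deriv u x‖) := by
      apply intervalIntegral.integral_mono_on (by norm_num)
        (hφc.abs.intervalIntegrable 0 1)
        ((continuous_const.mul (hcnu.mul hcnu')).intervalIntegrable 0 1)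
      exact fun x _ => hφb x
    have h2 : (∫ x in (0:ℝ)..1, 4 * (‖u x‖ * ‖deriv u x‖))
        = 4 * ∫ x in (0:ℝ)..1, ‖u x‖ * ‖deriv u x‖ := intervalIntegral.integral_const_mul _ _
    have h3 := my_cs hcnu hcnu'
    rw [h2] at h1
    calc (∫ x in (0:ℝ)..1, |φ x|) ≤ 4 * ∫ x in (0:ℝ)..1, ‖u x‖ * ‖deriv u x‖ := h1
      _ ≤ 4 * (Real.sqrt a * Real.sqrt b) := by
          apply mul_le_mul_of_nonneg_left _ (by norm_num)
          exact h3
  set M : ℝ := a + 4 * (Real.sqrt a * Real.sqrt b) with hM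
  have hMnn : 0 ≤ M := by positivity
  -- sup bound: g x ≤ M on [0,1]
  have hsup : ∀ x ∈ Icc (0:ℝ) 1, g x ≤ M := by
    obtain ⟨y, hy, hymin⟩ := isCompact_Icc.exists_isMinOn (Set.nonempty_Icc.2 (by norm_num))
      (hgc.continuousOn (s := Icc (0:ℝ) 1))
    have hgy : g y ≤ a := by
      have h1 : (∫ x in (0:ℝ)..1, g y) ≤ ∫ x in (0:ℝ)..1, g x := by
        apply intervalIntegral.integral_mono_on (by norm_num)
          (intervalIntegrable_const) (hgc.intervalIntegrable 0 1)
        exact fun x hx => hymin hx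
      have h2 : (∫ x in (0:ℝ)..1, g x) = a := by
        rw [ha]; exact intervalIntegral.integral_congr (fun x _ => hgn x)
      simpa [h2] using h1
    intro x hx
    have hftc : ∫ t in y..x, φ t = g x - g y :=
      intervalIntegral.integral_eq_sub_of_hasDerivAt (fun t _ => hder t)
        (hφc.intervalIntegrable y x)
    have habs : |∫ t in y..x, φ t| ≤ ∫ t in (0:ℝ)..1, |φ t| := by
      have h1 : |∫ t in y..x, φ t| ≤ ∫ t in Set.uIoc y x, |φ t| := by
        simpa [Real.norm_eq_abs] using
          intervalIntegral.norm_integral_le_integral_norm_uIoc (f := φ) (a := y) (b := x)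
          (μ := volume)
      have hsub : Set.uIoc y x ⊆ Ioc (0:ℝ) 1 := by
        rw [Set.uIoc]
        exact Ioc_subset_Ioc (le_min hy.1 hx.1) (max_le hy.2 hx.2)
      have h2 : (∫ t in Set.uIoc y x, |φ t|) ≤ ∫ t in Ioc (0:ℝ) 1, |φ t| := by
        apply setIntegral_mono_set
          (hφc.abs.integrableOn_Ioc)
          (Filter.Eventually.of_forall fun t => abs_nonneg _)
          (HasSubset.Subset.eventuallyLE hsub)
      have h3 : (∫ t in Ioc (0:ℝ) 1, |φ t|) = ∫ t in (0:ℝ)..1, |φ t| :=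
        (intervalIntegral.integral_of_le (by norm_num)).symm
      linarith
    have : g x ≤ g y + |∫ t in y..x, φ t| := by
      rw [hftc]
      cases abs_cases (g x - g y) with
      | inl h => linarith [h.1]
      | inr h => linarith [h.1]
    calc g x ≤ g y + |∫ t in y..x, φ t| := this
      _ ≤ a + ∫ t in (0:ℝ)..1, |φ t| := add_le_add hgy habs
      _ ≤ a + 4 * (Real.sqrt a * Real.sqrt b) := by linarith
  -- integral of sixth power
  have h6 : (∫ x in (0:ℝ)..1, ‖u x‖ ^ 6) ≤ M ^ 2 * a := by
    have h1 : (∫ x in (0:ℝ)..1, ‖u x‖ ^ 6) ≤ ∫ x in (0:ℝ)..1, M ^ 2 * ‖u x‖ ^ 2 := by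
      apply intervalIntegral.integral_mono_on (by norm_num)
        ((hcnu.pow 6).intervalIntegrable 0 1)
        ((continuous_const.mul (hcnu.pow 2)).intervalIntegrable 0 1)
      intro x hx
      have hgx := hsup x hx
      rw [hgn] at hgx
      have hn : (0:ℝ) ≤ ‖u x‖ := norm_nonneg _
      calc ‖u x‖ ^ 6 = (‖u x‖ ^ 2) ^ 2 * ‖u x‖ ^ 2 := by ring
        _ ≤ M ^ 2 * ‖u x‖ ^ 2 := by
            apply mul_le_mul_of_nonneg_right _ (by positivity)
            exact pow_le_pow_left₀ (by positivity) hgx 2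
    rw [intervalIntegral.integral_const_mul] at h1
    exact h1
  -- conclude
  have h6nn : 0 ≤ ∫ x in (0:ℝ)..1, ‖u x‖ ^ 6 :=
    intervalIntegral.integral_nonneg (by norm_num) (fun x _ => by positivity)
  have hsum : (∫ x in (0:ℝ)..1, ‖u x‖ ^ 2 + ‖deriv u x‖ ^ 2) = a + b := by
    rw [intervalIntegral.integral_add (f := fun x => ‖u x‖ ^ 2) (g := fun x => ‖deriv u x‖ ^ 2) ((hcnu.pow 2).intervalIntegrable 0 1)
      ((hcnu'.pow 2).intervalIntegrable 0 1)]
  rw [hsum]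
  have hstep1 : (∫ x in (0:ℝ)..1, ‖u x‖ ^ 6) ^ ((1:ℝ)/2) ≤ (M ^ 2 * a) ^ ((1:ℝ)/2) :=
    Real.rpow_le_rpow h6nn h6 (by norm_num)
  have hstep2 : (M ^ 2 * a) ^ ((1:ℝ)/2) = M * Real.sqrt a := by
    rw [← Real.sqrt_eq_rpow, Real.sqrt_mul (by positivity), Real.sqrt_sq hMnn]
  have hsab : Real.sqrt a ≤ Real.sqrt (a + b) := Real.sqrt_le_sqrt (by linarith)
  have hsbb : Real.sqrt b ≤ Real.sqrt (a + b) := Real.sqrt_le_sqrt (by linarith)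
  have hsa : Real.sqrt a * Real.sqrt a = a := Real.mul_self_sqrt hann
  have hstep3 : M * Real.sqrt a ≤ 5 * a * Real.sqrt (a + b) := by
    have h1 : a * Real.sqrt a ≤ a * Real.sqrt (a + b) :=
      mul_le_mul_of_nonneg_left hsab hann
    have h2 : 4 * (Real.sqrt a * Real.sqrt b) * Real.sqrt a ≤ 4 * (a * Real.sqrt (a + b)) := by
      have : Real.sqrt a * Real.sqrt b * Real.sqrt a = a * Real.sqrt b := by
        calc Real.sqrt a * Real.sqrt b * Real.sqrt a
            = (Real.sqrt a * Real.sqrt a) * Real.sqrt b := by ring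
          _ = a * Real.sqrt b := by rw [hsa]
      rw [mul_assoc, this]
      exact mul_le_mul_of_nonneg_left (mul_le_mul_of_nonneg_left hsbb hann) (by norm_num)
    calc M * Real.sqrt a = a * Real.sqrt a + 4 * (Real.sqrt a * Real.sqrt b) * Real.sqrt a := by
          rw [hM]; ring
      _ ≤ a * Real.sqrt (a + b) + 4 * (a * Real.sqrt (a + b)) := add_le_add h1 h2
      _ = 5 * a * Real.sqrt (a + b) := by ring
  calc (∫ x in (0:ℝ)..1, ‖u x‖ ^ 6) ^ ((1:ℝ)/2) ≤ (M ^ 2 * a) ^ ((1:ℝ)/2) := hstep1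
    _ = M * Real.sqrt a := hstep2
    _ ≤ 5 * a * Real.sqrt (a + b) := hstep3
    _ = 5 * a * (a + b) ^ ((1:ℝ)/2) := by rw [Real.sqrt_eq_rpow]
end
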